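/- For a a positive integer, the matrix identity holds: [[1, -1], [-1-3a, 2+3a]] · [[C(2a,a), C(2a,a-1)], [C(2a,a+1), C(2a,a)]] · [[2, 1], [1, 1]] = [[C(2a,a)/(a+1), 0], [0, C(2a+1,a+1)]], where C(2a,a)/(a+1) is the a-th Catalan number; consequently the Smith normal form of the Carlitz matrix [[C(2a,a), C(2a,a-1)], [C(2a,a+1), C(2a,a)]] over ℤ is diag(Cat(a), C(2a+1,a+1)). -/

import Mathlib

/-!
Every entry of the Carlitz matrix is a multiple of `Cat(a)`: `C(2a,a) = (a+1) Cat(a)` and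
`C(2a,a±1) = a Cat(a)`. Dividing out `Cat(a)` leaves `[[a+1, a], [a, a+1]]`, which the two
unimodular matrices reduce to `diag(1, 2a+1)`; and `C(2a+1,a+1) = (2a+1) Cat(a)` by Pascal's rule.
-/

open Matrix

theorem choose_two_mul_eq_succ_mul_catalan (a : ℕ) : (2 * a).choose a = (a + 1) * catalan a := by
  rw [succ_mul_catalan_eq_centralBinom, Nat.centralBinom_eq_two_mul_choose]

theorem choose_two_mul_succ_eq_mul_catalan (a : ℕ) : (2 * a).choose (a + 1) = a * catalan a := by
  have h := Nat.choose_succ_right_eq (2 * a) a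
  rw [show 2 * a - a = a by omega, choose_two_mul_eq_succ_mul_catalan] at h
  exact Nat.eq_of_mul_eq_mul_right (Nat.succ_pos a) (by rw [h, Nat.succ_eq_add_one]; ring)

theorem choose_two_mul_pred_eq_mul_catalan {a : ℕ} (ha : 1 ≤ a) :
    (2 * a).choose (a - 1) = a * catalan a := by
  rw [← choose_two_mul_succ_eq_mul_catalan, ← Nat.choose_symm (by omega : a + 1 ≤ 2 * a)]
  congr 1
  omega

theorem choose_two_mul_add_one_succ_eq_mul_catalan (a : ℕ) :
    (2 * a + 1).choose (a + 1) = (2 * a + 1) * catalan a := by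
  rw [Nat.choose_succ_succ, choose_two_mul_eq_succ_mul_catalan,
    choose_two_mul_succ_eq_mul_catalan]
  ring

theorem smith_form_scaled_fin_two {R : Type*} [CommRing R] (c x : R) :
    !![(1 : R), -1; -(1 + 3 * x), 2 + 3 * x] *
      !![c * (x + 1), c * x; c * x, c * (x + 1)] * !![(2 : R), 1; 1, 1]
      = !![c, 0; 0, (2 * x + 1) * c] := by
  ext i j
  fin_cases i <;> fin_cases j <;> simp [Matrix.mul_apply, Fin.sum_univ_two] <;> ring

theorem stmt19 (a : ℕ) (ha : 1 ≤ a) :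
    !![(1 : ℤ), -1; -(1 + 3*(a:ℤ)), 2 + 3*(a:ℤ)] *
      !![((2*a).choose a : ℤ), ((2*a).choose (a-1) : ℤ);
         ((2*a).choose (a+1) : ℤ), ((2*a).choose a : ℤ)] *
      !![(2 : ℤ), 1; 1, 1]
      = !![(catalan a : ℤ), 0; 0, ((2*a+1).choose (a+1) : ℤ)] ∧
    (!![(1 : ℤ), -1; -(1 + 3*(a:ℤ)), 2 + 3*(a:ℤ)]).det = 1 ∧
    (!![(2 : ℤ), 1; 1, 1]).det = 1 ∧
    (catalan a : ℤ) * ((a : ℤ) + 1) = ((2*a).choose a : ℤ) ∧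
    (catalan a : ℤ) ∣ ((2*a+1).choose (a+1) : ℤ) := by
  rw [choose_two_mul_eq_succ_mul_catalan, choose_two_mul_pred_eq_mul_catalan ha,
    choose_two_mul_succ_eq_mul_catalan, choose_two_mul_add_one_succ_eq_mul_catalan]
  push_cast
  refine ⟨?_, by simp [det_fin_two], by simp [det_fin_two], mul_comm _ _, dvd_mul_left _ _⟩
  simpa only [mul_comm ((a : ℤ) + 1), mul_comm (a : ℤ)] using
    smith_form_scaled_fin_two (catalan a : ℤ) (a : ℤ)
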